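/- Let ξ ∈ (0,1) be a BR-number and let N ≥ 0 have ξ-Ostrowski representation N = ∑_{i=0}^{j} b_i·q_i. Then S_N(2ξ) = 0 if and only if b_i = 0 for every even index i. -/

import Mathlib

/-- The deterministic random walk `S_n(ξ) = ∑_{j=1}^n (-1)^⌊j·ξ⌋`. -/
noncomputable def S (ξ : ℝ) (n : ℕ) : ℤ :=
  ∑ j ∈ Finset.Icc 1 n, ((Int.negOnePow ⌊(j : ℝ) * ξ⌋ : ℤˣ) : ℤ)

/-- The Gauss-map iteration: `gauss ξ 0 = ξ` and `gauss ξ (n+1) = {1 / gauss ξ n}`. -/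
noncomputable def gauss (ξ : ℝ) : ℕ → ℝ
  | 0 => ξ
  | n + 1 => Int.fract (1 / gauss ξ n)

/-- For irrational `ξ ∈ (0,1)`, `cfA ξ n` (for `n ≥ 1`) is the `n`-th partial quotient
`a_n` of the continued fraction expansion `ξ = [0; a₁, a₂, a₃, …]`. -/
noncomputable def cfA (ξ : ℝ) (n : ℕ) : ℕ :=
  (⌊1 / gauss ξ (n - 1)⌋).toNat

/-- The denominators of the convergents of `ξ`:
`q₀ = 1`, `q₁ = a₁`, and `q_{n+1} = a_{n+1}·q_n + q_{n-1}`. -/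
noncomputable def cfQ (ξ : ℝ) : ℕ → ℕ
  | 0 => 1
  | 1 => cfA ξ 1
  | n + 2 => cfA ξ (n + 2) * cfQ ξ (n + 1) + cfQ ξ n

/-- `ξ` is a BR-number if all its odd-indexed partial quotients `a₁, a₃, a₅, …` are even. -/
def IsBR (ξ : ℝ) : Prop := ∀ n : ℕ, Even (cfA ξ (2 * n + 1))

/-!
Write `E_n = |q_n ξ - p_n|` and `u_j = (-1)^⌊2jξ⌋`, so that `S_n(2ξ) = u_1 + ⋯ + u_n`.
For a BR-number every `q_{2μ+1}` is even and every `p_{2μ+1}` is odd, hence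
`Q_μ = q_{2μ+1} / 2` satisfies `2 Q_μ ξ = p_{2μ+1} - E_{2μ+1}`. The best approximation
property of the convergents then shows that shifting `j` by `Q_μ` flips `u_j` for
`1 ≤ j < q_{2μ+2}`, and that shifting by `q_{2μ+2}` preserves `u_j` except at `j = Q_{μ+1}`.
Hence `S(n + 2Q_μ) = S(n)`, so odd-indexed digits do not change `S`, while adding `c` copies
of `q_{2μ+2}` to an Ostrowski sum `N < q_{2μ+2}` adds `min(c, 2K - c)`, where the turning point
is `K = a_{2μ+3}/2` or `a_{2μ+3}/2 + 1` according as `Q_μ ≤ N` or not. This is positive unless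
`c = a_{2μ+3}` and `Q_μ ≤ N`, and then the Ostrowski condition forces an earlier nonzero even
digit. Induction on the digits gives `S_N(2ξ) ≥ 0`, with equality iff all even digits vanish.
-/

variable {ξ : ℝ}

noncomputable def cfP (ξ : ℝ) : ℕ → ℕ
  | 0 => 0
  | 1 => 1
  | n + 2 => cfA ξ (n + 2) * cfP ξ (n + 1) + cfP ξ n

/-- The `E_n = |q_n ξ - p_n|` of the sketch above, see `cfQ_mul_sub_cfP`. -/
noncomputable def cfErr (ξ : ℝ) (n : ℕ) : ℝ := ∏ i ∈ Finset.range (n + 1), gauss ξ i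

theorem cfP_mul_cfQ_sub (n : ℕ) :
    (cfP ξ (n + 1) * cfQ ξ n - cfP ξ n * cfQ ξ (n + 1) : ℤ) = (-1) ^ n := by
  induction n with
  | zero => simp [cfP, cfQ]
  | succ n ih =>
    simp only [cfP, cfQ, Nat.cast_add, Nat.cast_mul] at ih ⊢
    linear_combination (-1 : ℤ) * ih

theorem cfErr_succ (n : ℕ) : cfErr ξ (n + 1) = cfErr ξ n * gauss ξ (n + 1) :=
  Finset.prod_range_succ _ _

section Convergents

variable (hξ : ξ ∈ Set.Ioo (0 : ℝ) 1) (hirr : Irrational ξ)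
include hξ hirr

theorem gauss_mem_Ioo_and_irrational (n : ℕ) :
    gauss ξ n ∈ Set.Ioo (0 : ℝ) 1 ∧ Irrational (gauss ξ n) := by
  induction n with
  | zero => exact ⟨hξ, hirr⟩
  | succ n ih =>
    have hfract : Irrational (gauss ξ (n + 1)) :=
      ((one_div (gauss ξ n)).symm ▸ ih.2.inv).sub_intCast _
    exact ⟨⟨(Int.fract_nonneg _).lt_of_ne' hfract.ne_zero, Int.fract_lt_one _⟩, hfract⟩

theorem gauss_pos (n : ℕ) : 0 < gauss ξ n := (gauss_mem_Ioo_and_irrational hξ hirr n).1.1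

theorem gauss_lt_one (n : ℕ) : gauss ξ n < 1 := (gauss_mem_Ioo_and_irrational hξ hirr n).1.2

theorem one_div_gauss (n : ℕ) : 1 / gauss ξ n = cfA ξ (n + 1) + gauss ξ (n + 1) := by
  have hfloor : (0 : ℤ) ≤ ⌊1 / gauss ξ n⌋ :=
    Int.floor_nonneg.2 (by have := gauss_pos hξ hirr n; positivity)
  simp only [cfA, gauss, Nat.add_sub_cancel]
  rw [← Int.cast_natCast, Int.toNat_of_nonneg hfloor, Int.floor_add_fract]

theorem one_le_cfA (n : ℕ) : 1 ≤ cfA ξ (n + 1) := by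
  have : 1 < 1 / gauss ξ n := by
    rw [lt_div_iff₀ (gauss_pos hξ hirr n)]
    linarith [gauss_lt_one hξ hirr n]
  have : (0 : ℝ) < cfA ξ (n + 1) := by
    linarith [one_div_gauss hξ hirr n, gauss_lt_one hξ hirr (n + 1)]
  exact_mod_cast this

theorem cfErr_pos (n : ℕ) : 0 < cfErr ξ n :=
  Finset.prod_pos fun i _ => gauss_pos hξ hirr i

theorem cfErr_succ_lt (n : ℕ) : cfErr ξ (n + 1) < cfErr ξ n := by
  rw [cfErr_succ]
  exact mul_lt_of_lt_one_right (cfErr_pos hξ hirr n) (gauss_lt_one hξ hirr _)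

theorem cfErr_antitone : Antitone (cfErr ξ) :=
  antitone_nat_of_succ_le fun n => (cfErr_succ_lt hξ hirr n).le

theorem cfErr_lt_one (n : ℕ) : cfErr ξ n < 1 :=
  (cfErr_antitone hξ hirr n.zero_le).trans_lt (by simpa [cfErr, gauss] using hξ.2)

theorem cfErr_eq_add (n : ℕ) :
    cfErr ξ n = cfA ξ (n + 2) * cfErr ξ (n + 1) + cfErr ξ (n + 2) := by
  have h := one_div_gauss hξ hirr (n + 1)
  have := (gauss_pos hξ hirr (n + 1)).ne'
  rw [cfErr_succ (n + 1), cfErr_succ n]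
  field_simp at h
  linear_combination cfErr ξ n * h

theorem cfQ_mul_sub_cfP (n : ℕ) : cfQ ξ n * ξ - cfP ξ n = (-1) ^ n * cfErr ξ n := by
  induction n using Nat.twoStepInduction with
  | zero => simp [cfQ, cfP, cfErr, gauss]
  | one =>
    have h := one_div_gauss hξ hirr 0
    have h₀ : gauss ξ 0 = ξ := rfl
    have hE : cfErr ξ 1 = ξ * gauss ξ 1 := by simp [cfErr, Finset.prod_range_succ, h₀]
    rw [h₀] at h
    have := hξ.1.ne'
    field_simp at h
    simp only [cfQ, cfP, hE, Nat.cast_one]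
    linear_combination -h
  | more n ih₀ ih₁ =>
    simp only [cfQ, cfP, Nat.cast_add, Nat.cast_mul]
    linear_combination cfA ξ (n + 2) * ih₁ + ih₀ + (-1) ^ n * cfErr_eq_add hξ hirr n

theorem cfQ_mul_of_even {n : ℕ} (hn : Even n) : cfQ ξ n * ξ = cfP ξ n + cfErr ξ n := by
  linear_combination cfQ_mul_sub_cfP hξ hirr n + cfErr ξ n * hn.neg_one_pow (α := ℝ)

theorem cfQ_mul_of_odd {n : ℕ} (hn : Odd n) : cfQ ξ n * ξ = cfP ξ n - cfErr ξ n := by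
  linear_combination cfQ_mul_sub_cfP hξ hirr n + cfErr ξ n * hn.neg_one_pow (α := ℝ)

theorem one_le_cfQ (n : ℕ) : 1 ≤ cfQ ξ n := by
  induction n using Nat.twoStepInduction with
  | zero => rfl
  | one => exact one_le_cfA hξ hirr 0
  | more n _ ih =>
    exact ih.trans (Nat.le_add_right_of_le (Nat.le_mul_of_pos_left _ (one_le_cfA hξ hirr _)))

theorem cfQ_mono : Monotone (cfQ ξ) := by
  refine monotone_nat_of_le_succ fun n => ?_
  cases n with
  | zero => exact one_le_cfA hξ hirr 0
  | succ n => exact Nat.le_add_right_of_le (Nat.le_mul_of_pos_left _ (one_le_cfA hξ hirr _))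

/-- Best approximation by convergents. Writing `r = u q_k + v q_{k+1}`, the bound on `|r|`
forces `u ≠ 0` and `u v ≤ 0`, so `|r ξ - s| = |u| E_k + |v| E_{k+1}`. -/
theorem cfErr_le_abs_mul_sub (k : ℕ) {r : ℤ} (hr₀ : r ≠ 0) (hr : |r| < cfQ ξ (k + 1)) (s : ℤ) :
    cfErr ξ k ≤ |r * ξ - s| := by
  set e : ℤ := (-1) ^ k
  have he : e * e = 1 := by rw [← mul_pow]; norm_num
  have hdet := cfP_mul_cfQ_sub (ξ := ξ) k
  set u : ℤ := e * (r * cfP ξ (k + 1) - s * cfQ ξ (k + 1))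
  set v : ℤ := e * (s * cfQ ξ k - r * cfP ξ k)
  have hr_eq : r = u * cfQ ξ k + v * cfQ ξ (k + 1) := by
    linear_combination (-e * r) * hdet - r * he
  have hs_eq : s = u * cfP ξ k + v * cfP ξ (k + 1) := by
    linear_combination (-e * s) * hdet - s * he
  have hq₀ : (1 : ℤ) ≤ cfQ ξ k := by exact_mod_cast one_le_cfQ hξ hirr k
  have hq₁ : (1 : ℤ) ≤ cfQ ξ (k + 1) := by exact_mod_cast one_le_cfQ hξ hirr (k + 1)
  have hsign : (1 ≤ u ∧ v ≤ 0) ∨ (u ≤ -1 ∧ 0 ≤ v) := by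
    rw [abs_lt] at hr
    rcases lt_trichotomy u 0 with hu | hu | hu <;> rcases lt_trichotomy v 0 with hv | hv | hv
    all_goals first
      | omega
      | (exfalso; rcases hr₀.lt_or_gt with h | h <;> nlinarith)
  have hval : r * ξ - s = (-1) ^ k * (u * cfErr ξ k - v * cfErr ξ (k + 1)) := by
    rw [hr_eq, hs_eq]
    push_cast
    linear_combination u * cfQ_mul_sub_cfP hξ hirr k + v * cfQ_mul_sub_cfP hξ hirr (k + 1)
  have hE₀ := cfErr_pos hξ hirr k
  have hE₁ := cfErr_pos hξ hirr (k + 1)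
  rw [hval, abs_mul, abs_pow, abs_neg, abs_one, one_pow, one_mul, le_abs]
  rcases hsign with ⟨hu, hv⟩ | ⟨hu, hv⟩
  · left
    have : (1 : ℝ) ≤ u := by exact_mod_cast hu
    have : (v : ℝ) ≤ 0 := by exact_mod_cast hv
    nlinarith
  · right
    have : (u : ℝ) ≤ -1 := by exact_mod_cast hu
    have : (0 : ℝ) ≤ v := by exact_mod_cast hv
    nlinarith

theorem eq_mul_cfQ_of_mul_sub_lt (μ : ℕ) (r : ℕ) (s : ℤ) (hr : r < cfQ ξ (2 * μ + 3))
    (h₀ : 0 ≤ r * ξ - s) (h₁ : r * ξ - s < cfErr ξ (2 * μ + 1)) :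
    ∃ t : ℕ, r = t * cfQ ξ (2 * μ + 2) ∧ r * ξ - s = t * cfErr ξ (2 * μ + 2) := by
  induction r using Nat.strong_induction_on generalizing s with
  | _ r ih =>
  obtain rfl | hr₀ := Nat.eq_zero_or_pos r
  · rw [Nat.cast_zero, zero_mul, zero_sub] at h₀ h₁
    have : (s : ℝ) ≤ 0 ∧ -1 < (s : ℝ) := by
      constructor <;> linarith [cfErr_lt_one hξ hirr (2 * μ + 1)]
    obtain rfl : s = 0 := by
      have : s ≤ 0 ∧ -1 < s := by exact_mod_cast this
      omega
    exact ⟨0, by simp⟩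
  have hr₀' : (r : ℤ) ≠ 0 := by exact_mod_cast hr₀.ne'
  by_cases hq : r < cfQ ξ (2 * μ + 2)
  · have := cfErr_le_abs_mul_sub hξ hirr (2 * μ + 1) hr₀'
      (by rw [Nat.abs_cast]; exact_mod_cast hq) s
    rw [abs_of_nonneg (by exact_mod_cast h₀)] at this
    push_cast at this
    linarith
  have hE₂ := cfErr_le_abs_mul_sub hξ hirr (2 * μ + 2) hr₀'
    (by rw [Nat.abs_cast]; exact_mod_cast hr) s
  rw [abs_of_nonneg (by exact_mod_cast h₀)] at hE₂
  push_cast at hE₂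
  have hq₂ := cfQ_mul_of_even hξ hirr (n := 2 * μ + 2) ⟨μ + 1, by ring⟩
  have hq₂pos := one_le_cfQ hξ hirr (2 * μ + 2)
  obtain ⟨t, ht, hts⟩ := ih (r - cfQ ξ (2 * μ + 2)) (by omega)
    (s - (cfP ξ (2 * μ + 2) : ℤ)) (by omega)
    (by push_cast [Nat.cast_sub (not_lt.1 hq)]; linarith)
    (by push_cast [Nat.cast_sub (not_lt.1 hq)]; linarith [cfErr_pos hξ hirr (2 * μ + 2)])
  refine ⟨t + 1, by rw [add_one_mul]; omega, ?_⟩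
  push_cast [Nat.cast_sub (not_lt.1 hq)] at hts
  push_cast
  linarith

/-- Equality would make `2 (j + q_{2μ+2}) ξ` an integer. -/
theorem fract_mul_two_mul_ne_one_sub (μ j : ℕ) :
    Int.fract ((j : ℝ) * (2 * ξ)) ≠ 1 - 2 * cfErr ξ (2 * μ + 2) := by
  intro heq
  have := one_le_cfQ hξ hirr (2 * μ + 2)
  refine (hirr.natCast_mul (m := 2 * j + 2 * cfQ ξ (2 * μ + 2)) (by omega)).ne_int
    (⌊(j : ℝ) * (2 * ξ)⌋ + 1 + 2 * cfP ξ (2 * μ + 2)) ?_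
  rw [Int.fract] at heq
  push_cast
  linarith [cfQ_mul_of_even hξ hirr (n := 2 * μ + 2) ⟨μ + 1, by ring⟩]

end Convergents

section Parity

variable (hBR : IsBR ξ)
include hBR

theorem even_cfQ_of_odd {n : ℕ} (hn : Odd n) : Even (cfQ ξ n) := by
  obtain ⟨m, rfl⟩ := hn
  induction m with
  | zero => exact hBR 0
  | succ m ih => exact ((hBR (m + 1)).mul_right _).add ih

theorem odd_cfP_of_odd {n : ℕ} (hn : Odd n) : Odd (cfP ξ n) := by
  obtain ⟨m, rfl⟩ := hn
  induction m with
  | zero => exact odd_one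
  | succ m ih => exact ((hBR (m + 1)).mul_right _).add_odd ih

end Parity

/-- The `Q_μ` of the sketch above; the division is exact for BR-numbers (`two_mul_halfQ`). -/
noncomputable def halfQ (ξ : ℝ) (μ : ℕ) : ℕ := cfQ ξ (2 * μ + 1) / 2

theorem two_mul_halfQ (hBR : IsBR ξ) (μ : ℕ) : 2 * halfQ ξ μ = cfQ ξ (2 * μ + 1) :=
  Nat.mul_div_cancel' (even_iff_two_dvd.1 (even_cfQ_of_odd hBR (odd_two_mul_add_one μ)))

theorem halfQ_succ (hBR : IsBR ξ) (μ : ℕ) :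
    halfQ ξ (μ + 1) = cfA ξ (2 * μ + 3) / 2 * cfQ ξ (2 * μ + 2) + halfQ ξ μ := by
  have h₀ := two_mul_halfQ hBR μ
  have h₁ := two_mul_halfQ hBR (μ + 1)
  obtain ⟨k, hk⟩ := hBR (μ + 1)
  rw [show 2 * (μ + 1) + 1 = 2 * μ + 3 by ring] at h₁ hk
  rw [show cfQ ξ (2 * μ + 3) = cfA ξ (2 * μ + 3) * cfQ ξ (2 * μ + 2) + cfQ ξ (2 * μ + 1) from rfl,
    hk] at h₁
  rw [hk, ← two_mul, Nat.mul_div_cancel_left _ two_pos]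
  linarith

theorem floor_sub_eq_floor {w d : ℝ} (hd : 0 ≤ d) (h : d ≤ Int.fract w) : ⌊w - d⌋ = ⌊w⌋ := by
  rw [Int.floor_eq_iff]
  rw [Int.fract] at h
  constructor <;> linarith [Int.lt_floor_add_one w]

theorem floor_add_eq_ite {w d : ℝ} (hd₀ : 0 ≤ d) (hd₁ : d < 1) :
    ⌊w + d⌋ = ⌊w⌋ + if 1 - d ≤ Int.fract w then 1 else 0 := by
  rw [Int.floor_eq_iff]
  have h₁ := Int.floor_le w
  have h₂ := Int.lt_floor_add_one w
  rw [Int.fract] at *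
  split_ifs with h <;> push_cast <;> constructor <;> linarith

section BR

variable (hξ : ξ ∈ Set.Ioo (0 : ℝ) 1) (hirr : Irrational ξ) (hBR : IsBR ξ)
include hξ hirr hBR

theorem two_le_cfA_of_odd {n : ℕ} (hn : Odd n) : 2 ≤ cfA ξ n := by
  obtain ⟨m, rfl⟩ := hn
  have := one_le_cfA hξ hirr (2 * m)
  obtain ⟨k, hk⟩ := hBR m
  omega

theorem cfQ_two_mul_le_halfQ (μ : ℕ) : cfQ ξ (2 * μ) ≤ halfQ ξ μ := by
  have h := two_mul_halfQ hBR μ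
  have ha := two_le_cfA_of_odd hξ hirr hBR (odd_two_mul_add_one μ)
  cases μ with
  | zero => simp only [mul_zero, zero_add, cfQ] at h ha ⊢; omega
  | succ ν =>
    have : cfQ ξ (2 * (ν + 1) + 1) =
        cfA ξ (2 * (ν + 1) + 1) * cfQ ξ (2 * (ν + 1)) + cfQ ξ (2 * ν + 1) := rfl
    nlinarith

theorem one_le_halfQ (μ : ℕ) : 1 ≤ halfQ ξ μ :=
  (one_le_cfQ hξ hirr _).trans (cfQ_two_mul_le_halfQ hξ hirr hBR μ)

theorem halfQ_lt_cfQ (μ : ℕ) : halfQ ξ μ < cfQ ξ (2 * μ + 1) := by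
  have := one_le_halfQ hξ hirr hBR μ
  have := two_mul_halfQ hBR μ
  omega

theorem halfQ_mul_two_mul (μ : ℕ) :
    (halfQ ξ μ : ℝ) * (2 * ξ) = cfP ξ (2 * μ + 1) - cfErr ξ (2 * μ + 1) := by
  rw [← cfQ_mul_of_odd hξ hirr (odd_two_mul_add_one μ), ← two_mul_halfQ hBR μ]
  push_cast
  ring

theorem xi_lt_half : ξ < 1 / 2 := by
  have h := cfQ_mul_of_odd hξ hirr (n := 1) odd_one
  have ha : (2 : ℝ) ≤ cfA ξ 1 := by exact_mod_cast two_le_cfA_of_odd hξ hirr hBR odd_one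
  simp only [cfQ, cfP, Nat.cast_one] at h
  nlinarith [cfErr_pos hξ hirr 1, hξ.1]

theorem cfErr_lt_half (n : ℕ) : cfErr ξ n < 1 / 2 :=
  (cfErr_antitone hξ hirr n.zero_le).trans_lt
    (by simpa [cfErr, gauss] using xi_lt_half hξ hirr hBR)

theorem two_mul_cfErr_add_le (μ : ℕ) :
    2 * cfErr ξ (2 * μ + 2) + cfErr ξ (2 * μ + 3) ≤ cfErr ξ (2 * μ + 1) := by
  have ha : (2 : ℝ) ≤ cfA ξ (2 * μ + 3) := by
    exact_mod_cast two_le_cfA_of_odd hξ hirr hBR (n := 2 * μ + 3) ⟨μ + 1, by ring⟩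
  rw [cfErr_eq_add hξ hirr (2 * μ + 1)]
  nlinarith [cfErr_pos hξ hirr (2 * μ + 2)]

theorem cfErr_le_fract_mul_two_mul (μ j : ℕ) (hj₁ : 1 ≤ j) (hj : j < cfQ ξ (2 * μ + 2)) :
    cfErr ξ (2 * μ + 1) ≤ Int.fract ((j : ℝ) * (2 * ξ)) := by
  set E := cfErr ξ (2 * μ + 1)
  set m := ⌊(j : ℝ) * (2 * ξ)⌋
  have hE := cfErr_pos hξ hirr (2 * μ + 1)
  by_contra! hlt
  have hz : 0 ≤ (j : ℝ) * (2 * ξ) - m := Int.fract_nonneg _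
  replace hlt : (j : ℝ) * (2 * ξ) - m < E := hlt
  -- Then `jξ` (for `m` even) or `(j - Q_μ)ξ` (for `m` odd) is closer than `E` to an integer.
  obtain ⟨s, hs | hs⟩ := Int.even_or_odd' m
  · have hba := cfErr_le_abs_mul_sub hξ hirr (2 * μ + 1) (r := j) (by omega)
      (by rw [Nat.abs_cast]; exact_mod_cast hj) s
    have hval : (j : ℤ) * ξ - s = ((j : ℝ) * (2 * ξ) - m) / 2 := by rw [hs]; push_cast; ring
    rw [hval, abs_of_nonneg (by positivity)] at hba
    linarith
  obtain ⟨l, hl⟩ := odd_cfP_of_odd hBR (odd_two_mul_add_one μ)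
  have hp : (cfP ξ (2 * μ + 1) : ℝ) = 2 * l + 1 := by exact_mod_cast hl
  have hm : (m : ℝ) = 2 * s + 1 := by rw [hs]; push_cast; ring
  have hval : (((j : ℤ) - halfQ ξ μ : ℤ) : ℝ) * ξ - ((s - l : ℤ) : ℝ) =
      ((j : ℝ) * (2 * ξ) - m + E) / 2 := by
    push_cast
    linear_combination (-1 / 2 : ℝ) * halfQ_mul_two_mul hξ hirr hBR μ + (1 / 2 : ℝ) * hm -
      (1 / 2 : ℝ) * hp
  have hr : (j : ℤ) - halfQ ξ μ ≠ 0 := by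
    intro h0
    rw [h0, Int.cast_zero, zero_mul, zero_sub] at hval
    have : (-1 : ℝ) < ((s - l : ℤ) : ℝ) ∧ ((s - l : ℤ) : ℝ) < 0 := by
      constructor <;> linarith [cfErr_lt_one hξ hirr (2 * μ + 1)]
    have : -1 < s - l ∧ s - l < 0 := by exact_mod_cast this
    omega
  have hQlt := halfQ_lt_cfQ hξ hirr hBR μ
  have hQ₁ := one_le_halfQ hξ hirr hBR μ
  have hq := cfQ_mono hξ hirr (by omega : 2 * μ + 1 ≤ 2 * μ + 2)
  have hba := cfErr_le_abs_mul_sub hξ hirr (2 * μ + 1) hr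
    (show _ < ((cfQ ξ (2 * μ + 2) : ℕ) : ℤ) by rw [abs_lt]; constructor <;> omega) (s - l)
  rw [hval, abs_of_nonneg (by positivity)] at hba
  linarith

theorem floor_add_halfQ_mul_two_mul (μ j : ℕ) (hj₁ : 1 ≤ j) (hj : j < cfQ ξ (2 * μ + 2)) :
    ⌊((j + halfQ ξ μ : ℕ) : ℝ) * (2 * ξ)⌋ = ⌊(j : ℝ) * (2 * ξ)⌋ + cfP ξ (2 * μ + 1) := by
  have hsplit : ((j + halfQ ξ μ : ℕ) : ℝ) * (2 * ξ) =
      ((j : ℝ) * (2 * ξ) - cfErr ξ (2 * μ + 1)) + ((cfP ξ (2 * μ + 1) : ℤ) : ℝ) := by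
    push_cast
    linear_combination halfQ_mul_two_mul hξ hirr hBR μ
  rw [hsplit, Int.floor_add_intCast, floor_sub_eq_floor (cfErr_pos hξ hirr _).le
    (cfErr_le_fract_mul_two_mul hξ hirr hBR μ j hj₁ hj)]

theorem two_mul_eq_cfA_of_mul_cfErr_mem (μ t : ℕ)
    (h₁ : cfErr ξ (2 * μ + 1) / 2 - cfErr ξ (2 * μ + 2) < t * cfErr ξ (2 * μ + 2))
    (h₂ : t * cfErr ξ (2 * μ + 2) ≤ cfErr ξ (2 * μ + 1) / 2) :
    2 * t = cfA ξ (2 * μ + 3) := by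
  have hE₂ := cfErr_pos hξ hirr (2 * μ + 2)
  have hE₃ := cfErr_pos hξ hirr (2 * μ + 3)
  have hE₃₂ := cfErr_succ_lt hξ hirr (2 * μ + 2)
  have hrec := cfErr_eq_add hξ hirr (2 * μ + 1)
  have hlow : ((cfA ξ (2 * μ + 3) : ℝ) - 2) * cfErr ξ (2 * μ + 2) <
      (2 * t) * cfErr ξ (2 * μ + 2) := by
    linarith
  have hup : (2 * t) * cfErr ξ (2 * μ + 2) <
      ((cfA ξ (2 * μ + 3) : ℝ) + 1) * cfErr ξ (2 * μ + 2) := by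
    linarith
  have hlow' : cfA ξ (2 * μ + 3) < 2 * t + 2 := by
    have := lt_of_mul_lt_mul_right hlow hE₂.le
    exact_mod_cast (by linarith : (cfA ξ (2 * μ + 3) : ℝ) < 2 * t + 2)
  have hup' : 2 * t < cfA ξ (2 * μ + 3) + 1 := by
    exact_mod_cast lt_of_mul_lt_mul_right hup hE₂.le
  obtain ⟨k, hk⟩ := hBR (μ + 1)
  rw [show 2 * (μ + 1) + 1 = 2 * μ + 3 by ring] at hk
  omega

theorem eq_halfQ_succ_of_mul_sub_mem (μ j : ℕ) (s : ℤ) (hj : j < cfQ ξ (2 * μ + 3))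
    (h₁ : cfErr ξ (2 * μ + 1) / 2 - cfErr ξ (2 * μ + 2) < ((j : ℝ) - halfQ ξ μ) * ξ - s)
    (h₂ : ((j : ℝ) - halfQ ξ μ) * ξ - s ≤ cfErr ξ (2 * μ + 1) / 2) :
    j = halfQ ξ (μ + 1) := by
  have hE₁₂ := two_mul_cfErr_add_le hξ hirr hBR μ
  have hE₃ := cfErr_pos hξ hirr (2 * μ + 3)
  rcases lt_or_ge j (halfQ ξ μ) with hjQ | hQj
  · exfalso
    have hQlt := halfQ_lt_cfQ hξ hirr hBR μ
    have hba := cfErr_le_abs_mul_sub hξ hirr (2 * μ) (r := (j : ℤ) - halfQ ξ μ) (by omega)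
      (by rw [abs_lt]; constructor <;> omega) s
    push_cast at hba
    rw [abs_of_pos (by linarith)] at hba
    linarith [cfErr_succ_lt hξ hirr (2 * μ), cfErr_pos hξ hirr (2 * μ + 2)]
  have hcast : ((j - halfQ ξ μ : ℕ) : ℝ) = (j : ℝ) - halfQ ξ μ := by
    push_cast [Nat.cast_sub hQj]
    ring
  obtain ⟨t, ht, htE⟩ := eq_mul_cfQ_of_mul_sub_lt hξ hirr μ (j - halfQ ξ μ) s (by omega)
    (by rw [hcast]; linarith) (by rw [hcast]; linarith)
  rw [hcast] at htE
  have h2t := two_mul_eq_cfA_of_mul_cfErr_mem hξ hirr hBR μ t (by linarith) (by linarith)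
  rw [halfQ_succ hBR, ← h2t, Nat.mul_div_cancel_left _ two_pos]
  omega

theorem eq_halfQ_succ_of_one_sub_le_fract (μ j : ℕ) (hj₁ : 1 ≤ j)
    (hj : j + cfQ ξ (2 * μ + 2) ≤ cfQ ξ (2 * μ + 3))
    (h : 1 - 2 * cfErr ξ (2 * μ + 2) ≤ Int.fract ((j : ℝ) * (2 * ξ))) :
    j = halfQ ξ (μ + 1) := by
  set w := (j : ℝ) * (2 * ξ)
  set m := ⌊w⌋
  have hq₂pos := one_le_cfQ hξ hirr (2 * μ + 2)
  have hz₁ : 1 - 2 * cfErr ξ (2 * μ + 2) < w - m :=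
    lt_of_le_of_ne h (fract_mul_two_mul_ne_one_sub hξ hirr μ j).symm
  have hz₂ : w - m < 1 := Int.fract_lt_one w
  -- Now `2jξ` lies less than `2E_{2μ+2}` below `m + 1`. If `m + 1` is even this contradicts
  -- best approximation for `j`; if it is odd, `(j - Q_μ)ξ` lies just below `E_{2μ+1}/2` mod 1.
  obtain ⟨s, hs | hs⟩ := Int.even_or_odd' (m + 1)
  · exfalso
    have hba := cfErr_le_abs_mul_sub hξ hirr (2 * μ + 2) (r := j) (by omega)
      (show _ < ((cfQ ξ (2 * μ + 3) : ℕ) : ℤ) by rw [Nat.abs_cast]; omega) s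
    have hm : (m : ℝ) + 1 = 2 * s := by exact_mod_cast hs
    have hval : (j : ℤ) * ξ - s = -((m + 1 - w) / 2) := by
      push_cast
      linear_combination hm / 2
    rw [hval, abs_neg, abs_of_pos (by linarith)] at hba
    linarith
  obtain ⟨l, hl⟩ := odd_cfP_of_odd hBR (odd_two_mul_add_one μ)
  have hp : (cfP ξ (2 * μ + 1) : ℝ) = 2 * l + 1 := by exact_mod_cast hl
  have hm : (m : ℝ) + 1 = 2 * s + 1 := by exact_mod_cast hs
  have hval : ((j : ℝ) - halfQ ξ μ) * ξ - ((s - l : ℤ) : ℝ) =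
      (cfErr ξ (2 * μ + 1) - (m + 1 - w)) / 2 := by
    push_cast
    linear_combination (-1 / 2 : ℝ) * halfQ_mul_two_mul hξ hirr hBR μ + (1 / 2 : ℝ) * hm -
      (1 / 2 : ℝ) * hp
  exact eq_halfQ_succ_of_mul_sub_mem hξ hirr hBR μ j (s - l) (by omega)
    (by rw [hval]; linarith) (by rw [hval]; linarith)

theorem floor_halfQ_mul_two_mul (μ : ℕ) :
    ⌊(halfQ ξ μ : ℝ) * (2 * ξ)⌋ = cfP ξ (2 * μ + 1) - 1 := by
  rw [Int.floor_eq_iff, halfQ_mul_two_mul hξ hirr hBR μ]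
  push_cast
  constructor <;> linarith [cfErr_pos hξ hirr (2 * μ + 1), cfErr_lt_one hξ hirr (2 * μ + 1)]

theorem one_sub_two_mul_cfErr_le_fract_iff (μ j : ℕ) (hj₁ : 1 ≤ j)
    (hj : j + cfQ ξ (2 * μ + 2) ≤ cfQ ξ (2 * μ + 3)) :
    1 - 2 * cfErr ξ (2 * μ + 2) ≤ Int.fract ((j : ℝ) * (2 * ξ)) ↔ j = halfQ ξ (μ + 1) := by
  refine ⟨eq_halfQ_succ_of_one_sub_le_fract hξ hirr hBR μ j hj₁ hj, ?_⟩
  rintro rfl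
  have hfloor := floor_halfQ_mul_two_mul hξ hirr hBR (μ + 1)
  have hQ := halfQ_mul_two_mul hξ hirr hBR (μ + 1)
  rw [show 2 * (μ + 1) + 1 = 2 * μ + 3 by ring] at hfloor hQ
  rw [Int.fract, hfloor, hQ]
  push_cast
  linarith [cfErr_succ_lt hξ hirr (2 * μ + 2), cfErr_pos hξ hirr (2 * μ + 3)]

theorem floor_add_cfQ_mul_two_mul (μ j : ℕ) (hj₁ : 1 ≤ j)
    (hj : j + cfQ ξ (2 * μ + 2) ≤ cfQ ξ (2 * μ + 3)) :
    ⌊((j + cfQ ξ (2 * μ + 2) : ℕ) : ℝ) * (2 * ξ)⌋ =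
      ⌊(j : ℝ) * (2 * ξ)⌋ + 2 * cfP ξ (2 * μ + 2) + if j = halfQ ξ (μ + 1) then 1 else 0 := by
  have hsplit : ((j + cfQ ξ (2 * μ + 2) : ℕ) : ℝ) * (2 * ξ) =
      ((j : ℝ) * (2 * ξ) + 2 * cfErr ξ (2 * μ + 2)) + ((2 * cfP ξ (2 * μ + 2) : ℤ) : ℝ) := by
    push_cast
    linear_combination 2 * cfQ_mul_of_even hξ hirr (n := 2 * μ + 2) ⟨μ + 1, by ring⟩
  rw [hsplit, Int.floor_add_intCast,
    floor_add_eq_ite (by linarith [cfErr_pos hξ hirr (2 * μ + 2)])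
      (by linarith [cfErr_lt_half hξ hirr hBR (2 * μ + 2)]),
    if_congr (one_sub_two_mul_cfErr_le_fract_iff hξ hirr hBR μ j hj₁ hj) rfl rfl]
  ring

end BR

theorem S_zero (η : ℝ) : S η 0 = 0 := by simp [S]

theorem S_succ (η : ℝ) (n : ℕ) :
    S η (n + 1) = S η n + (⌊((n + 1 : ℕ) : ℝ) * η⌋.negOnePow : ℤ) :=
  Finset.sum_Icc_succ_top (by omega) _

section Walk

variable (hξ : ξ ∈ Set.Ioo (0 : ℝ) 1) (hirr : Irrational ξ) (hBR : IsBR ξ)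
include hξ hirr hBR

theorem S_two_mul_of_le_cfA_one (c : ℕ) (hc : c ≤ cfA ξ 1) :
    S (2 * ξ) c = min (c : ℤ) (cfA ξ 1 - c) := by
  have ha := cfQ_mul_of_odd hξ hirr (n := 1) odd_one
  simp only [cfQ, cfP, Nat.cast_one] at ha
  have hE₁ : cfErr ξ 1 < ξ := by simpa [cfErr, gauss] using cfErr_succ_lt hξ hirr 0
  have hE₁pos := cfErr_pos hξ hirr 1
  obtain ⟨A, hA⟩ := hBR 0
  rw [mul_zero, zero_add] at hA
  induction c with
  | zero => simp [S_zero]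
  | succ c ih =>
    have hfloor : ⌊((c + 1 : ℕ) : ℝ) * (2 * ξ)⌋ = if 2 * (c + 1) ≤ cfA ξ 1 then 0 else 1 := by
      have hc' : (c + 1 : ℝ) ≤ cfA ξ 1 := by exact_mod_cast hc
      rw [Int.floor_eq_iff]
      split_ifs with h
      · have h' : (2 * (c + 1) : ℝ) ≤ cfA ξ 1 := by exact_mod_cast h
        push_cast
        constructor <;> nlinarith [hξ.1]
      · have h' : (cfA ξ 1 + 1 : ℝ) ≤ 2 * (c + 1) := by
          exact_mod_cast (by omega : cfA ξ 1 + 1 ≤ 2 * (c + 1))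
        push_cast
        constructor <;> nlinarith [hξ.1]
    rw [S_succ, ih (by omega), hfloor]
    split_ifs <;> simp only [Int.negOnePow_zero, Int.negOnePow_one, Units.val_one, Units.val_neg,
      Nat.cast_add, Nat.cast_one] <;> omega

theorem S_add_halfQ (μ n : ℕ) (hn : n < cfQ ξ (2 * μ + 2)) :
    S (2 * ξ) (n + halfQ ξ μ) = S (2 * ξ) (halfQ ξ μ) - S (2 * ξ) n := by
  induction n with
  | zero => simp [S_zero]
  | succ n ih =>
    rw [show n + 1 + halfQ ξ μ = n + halfQ ξ μ + 1 by ring, S_succ, S_succ, ih (by omega),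
      show n + halfQ ξ μ + 1 = n + 1 + halfQ ξ μ by ring,
      floor_add_halfQ_mul_two_mul hξ hirr hBR μ (n + 1) (by omega) hn, Int.negOnePow_add,
      Int.negOnePow_odd (cfP ξ (2 * μ + 1) : ℤ)
        (by exact_mod_cast odd_cfP_of_odd hBR (odd_two_mul_add_one μ))]
    simp only [mul_neg, mul_one, Units.val_neg]
    ring

theorem S_add_cfQ_odd (μ M : ℕ) (hM : M + cfQ ξ (2 * μ + 1) ≤ cfQ ξ (2 * μ + 2)) :
    S (2 * ξ) (M + cfQ ξ (2 * μ + 1)) = S (2 * ξ) M := by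
  have h₂ := two_mul_halfQ hBR μ
  have h₁ := one_le_halfQ hξ hirr hBR μ
  rw [show M + cfQ ξ (2 * μ + 1) = M + halfQ ξ μ + halfQ ξ μ by omega,
    S_add_halfQ hξ hirr hBR μ _ (by omega), S_add_halfQ hξ hirr hBR μ _ (by omega)]
  ring

theorem S_add_mul_cfQ_odd (μ t M : ℕ) (hM : M + t * cfQ ξ (2 * μ + 1) ≤ cfQ ξ (2 * μ + 2)) :
    S (2 * ξ) (M + t * cfQ ξ (2 * μ + 1)) = S (2 * ξ) M := by
  induction t with
  | zero => simp
  | succ t ih =>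
    rw [add_one_mul, ← add_assoc] at hM ⊢
    rw [S_add_cfQ_odd hξ hirr hBR μ _ hM, ih (by omega)]

theorem S_cfQ_two_mul (k : ℕ) : S (2 * ξ) (cfQ ξ (2 * k)) = 1 := by
  induction k with
  | zero =>
    have ha := two_le_cfA_of_odd hξ hirr hBR odd_one
    rw [mul_zero, show cfQ ξ 0 = 1 from rfl, S_two_mul_of_le_cfA_one hξ hirr hBR 1 (by omega)]
    omega
  | succ k ih =>
    have hq : cfQ ξ (2 * (k + 1)) = cfQ ξ (2 * k) + cfA ξ (2 * k + 2) * cfQ ξ (2 * k + 1) :=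
      add_comm _ _
    rw [hq, S_add_mul_cfQ_odd hξ hirr hBR k _ _
      (by rw [← hq, show 2 * (k + 1) = 2 * k + 2 by ring]), ih]

theorem S_add_cfQ_even (μ n : ℕ) (hn : n + cfQ ξ (2 * μ + 2) ≤ cfQ ξ (2 * μ + 3)) :
    S (2 * ξ) (n + cfQ ξ (2 * μ + 2)) =
      S (2 * ξ) n + 1 - 2 * if halfQ ξ (μ + 1) ≤ n then 1 else 0 := by
  induction n with
  | zero =>
    have := one_le_halfQ hξ hirr hBR (μ + 1)
    rw [zero_add, if_neg (by omega), S_zero, show 2 * μ + 2 = 2 * (μ + 1) by ring,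
      S_cfQ_two_mul hξ hirr hBR]
    ring
  | succ n ih =>
    rw [show n + 1 + cfQ ξ (2 * μ + 2) = n + cfQ ξ (2 * μ + 2) + 1 by ring, S_succ, ih (by omega),
      show n + cfQ ξ (2 * μ + 2) + 1 = n + 1 + cfQ ξ (2 * μ + 2) by ring,
      floor_add_cfQ_mul_two_mul hξ hirr hBR μ (n + 1) (by omega) hn, S_succ,
      Int.negOnePow_add, Int.negOnePow_add, Int.negOnePow_two_mul]
    by_cases hQ : n + 1 = halfQ ξ (μ + 1)
    · obtain ⟨l, hl⟩ := odd_cfP_of_odd hBR (odd_two_mul_add_one (μ + 1))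
      have hu : ⌊(halfQ ξ (μ + 1) : ℝ) * (2 * ξ)⌋.negOnePow = 1 := by
        rw [floor_halfQ_mul_two_mul hξ hirr hBR, hl]
        simp
      rw [if_pos hQ, if_neg (by omega), if_pos (by omega), hQ, hu]
      simp only [Int.negOnePow_one, Units.val_mul, Units.val_neg, Units.val_one]
      ring
    · rw [if_neg hQ, if_congr (show halfQ ξ (μ + 1) ≤ n ↔ halfQ ξ (μ + 1) ≤ n + 1 by omega) rfl rfl]
      simp only [Int.negOnePow_zero, Units.val_mul, Units.val_one]
      ring

theorem S_add_mul_cfQ_even (μ N K t : ℕ)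
    (hK : ∀ s, halfQ ξ (μ + 1) ≤ N + s * cfQ ξ (2 * μ + 2) ↔ K ≤ s)
    (ht : N + t * cfQ ξ (2 * μ + 2) ≤ cfQ ξ (2 * μ + 3)) :
    S (2 * ξ) (N + t * cfQ ξ (2 * μ + 2)) = S (2 * ξ) N + min (t : ℤ) (2 * K - t) := by
  induction t with
  | zero => simp
  | succ t ih =>
    rw [add_one_mul, ← add_assoc] at ht ⊢
    rw [S_add_cfQ_even hξ hirr hBR μ _ ht, ih (by omega), if_congr (hK t) rfl rfl]
    split_ifs <;> omega

theorem halfQ_succ_le_add_mul_iff (μ N : ℕ) (hN : N < cfQ ξ (2 * μ + 2)) (s : ℕ) :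
    halfQ ξ (μ + 1) ≤ N + s * cfQ ξ (2 * μ + 2) ↔
      cfA ξ (2 * μ + 3) / 2 + (if halfQ ξ μ ≤ N then 0 else 1) ≤ s := by
  have hQ := (halfQ_lt_cfQ hξ hirr hBR μ).trans_le
    (cfQ_mono hξ hirr (by omega : 2 * μ + 1 ≤ 2 * μ + 2))
  rw [halfQ_succ hBR]
  set A := cfA ξ (2 * μ + 3) / 2
  rcases lt_trichotomy s A with hs | rfl | hs
  · have := Nat.mul_le_mul_right (cfQ ξ (2 * μ + 2)) hs
    rw [Nat.succ_mul] at this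
    split_ifs <;> omega
  · split_ifs <;> omega
  · have := Nat.mul_le_mul_right (cfQ ξ (2 * μ + 2)) hs
    rw [Nat.succ_mul] at this
    split_ifs <;> omega

theorem one_le_S_add_mul_cfQ_even (μ N c : ℕ) (hN : N < cfQ ξ (2 * μ + 2)) (hc₁ : 1 ≤ c)
    (hca : c ≤ cfA ξ (2 * μ + 3)) (hc : N + c * cfQ ξ (2 * μ + 2) ≤ cfQ ξ (2 * μ + 3))
    (hS : 0 ≤ S (2 * ξ) N) (hfull : c = cfA ξ (2 * μ + 3) → halfQ ξ μ ≤ N → 1 ≤ S (2 * ξ) N) :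
    1 ≤ S (2 * ξ) (N + c * cfQ ξ (2 * μ + 2)) := by
  rw [S_add_mul_cfQ_even hξ hirr hBR μ N _ c (halfQ_succ_le_add_mul_iff hξ hirr hBR μ N hN) hc]
  obtain ⟨A, hA⟩ := hBR (μ + 1)
  rw [show 2 * (μ + 1) + 1 = 2 * μ + 3 by ring] at hA
  split_ifs with hQ
  · by_cases hcA : c = cfA ξ (2 * μ + 3)
    · have := hfull hcA hQ
      omega
    · omega
  · omega

end Walk

structure IsOstrowskiDigits (ξ : ℝ) (b : ℕ → ℕ) : Prop where
  zero_lt : b 0 < cfA ξ 1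
  succ_le : ∀ i, b (i + 1) ≤ cfA ξ (i + 2)
  eq_zero_of_succ_eq : ∀ i, b (i + 1) = cfA ξ (i + 2) → b i = 0

noncomputable def ostrowskiSum (ξ : ℝ) (b : ℕ → ℕ) (n : ℕ) : ℕ :=
  ∑ i ∈ Finset.range n, b i * cfQ ξ i

theorem ostrowskiSum_succ (b : ℕ → ℕ) (n : ℕ) :
    ostrowskiSum ξ b (n + 1) = ostrowskiSum ξ b n + b n * cfQ ξ n :=
  Finset.sum_range_succ _ _

theorem IsOstrowskiDigits.ostrowskiSum_lt_cfQ {b : ℕ → ℕ} (hb : IsOstrowskiDigits ξ b) (n : ℕ) :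
    ostrowskiSum ξ b n < cfQ ξ n := by
  induction n using Nat.twoStepInduction with
  | zero => simp [ostrowskiSum, cfQ]
  | one => simpa [ostrowskiSum, cfQ] using hb.zero_lt
  | more n ih₀ ih₁ =>
    have hq : cfQ ξ (n + 2) = cfA ξ (n + 2) * cfQ ξ (n + 1) + cfQ ξ n := rfl
    rw [ostrowskiSum_succ, hq]
    by_cases hmax : b (n + 1) = cfA ξ (n + 2)
    · rw [ostrowskiSum_succ, hb.eq_zero_of_succ_eq n hmax, zero_mul, add_zero, hmax]
      omega
    · have := Nat.mul_le_mul_right (cfQ ξ (n + 1)) (lt_of_le_of_ne (hb.succ_le n) hmax)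
      rw [Nat.succ_mul] at this
      omega

section Main

variable (hξ : ξ ∈ Set.Ioo (0 : ℝ) 1) (hirr : Irrational ξ) (hBR : IsBR ξ)
include hξ hirr hBR

theorem one_le_S_ostrowskiSum_of_ne_zero {b : ℕ → ℕ} (hb : IsOstrowskiDigits ξ b) (μ : ℕ)
    (hS : 0 ≤ S (2 * ξ) (ostrowskiSum ξ b (2 * μ + 2)))
    (hS₀ : S (2 * ξ) (ostrowskiSum ξ b (2 * μ + 2)) = 0 → ∀ i < 2 * μ + 2, Even i → b i = 0)
    (hc : b (2 * μ + 2) ≠ 0) :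
    1 ≤ S (2 * ξ) (ostrowskiSum ξ b (2 * μ + 3)) := by
  have hN := hb.ostrowskiSum_lt_cfQ (2 * μ + 2)
  have htot := hb.ostrowskiSum_lt_cfQ (2 * μ + 3)
  rw [ostrowskiSum_succ] at htot ⊢
  refine one_le_S_add_mul_cfQ_even hξ hirr hBR μ _ _ hN (by omega) (hb.succ_le (2 * μ + 1)) htot.le
    hS fun hmax hQ => ?_
  by_contra! hlt
  have hzero := hS₀ (by omega)
  have hsum : ostrowskiSum ξ b (2 * μ + 2) = ostrowskiSum ξ b (2 * μ) := by
    rw [ostrowskiSum_succ, ostrowskiSum_succ, hb.eq_zero_of_succ_eq (2 * μ + 1) hmax,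
      hzero (2 * μ) (by omega) (even_two_mul μ), zero_mul, add_zero, zero_mul, add_zero]
  have := hb.ostrowskiSum_lt_cfQ (2 * μ)
  have := cfQ_two_mul_le_halfQ hξ hirr hBR μ
  omega

theorem S_two_mul_ostrowskiSum {b : ℕ → ℕ} (hb : IsOstrowskiDigits ξ b) (n : ℕ) :
    0 ≤ S (2 * ξ) (ostrowskiSum ξ b n) ∧
      (S (2 * ξ) (ostrowskiSum ξ b n) = 0 ↔ ∀ i < n, Even i → b i = 0) := by
  induction n with
  | zero => simp [ostrowskiSum, S_zero]
  | succ n ih =>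
    obtain ⟨k, rfl | rfl⟩ := Nat.even_or_odd' n
    · rcases k with _ | μ
      · have h := S_two_mul_of_le_cfA_one hξ hirr hBR (b 0) hb.zero_lt.le
        have hb₀ := hb.zero_lt
        simp only [ostrowskiSum, mul_zero, zero_add, Finset.sum_range_one, cfQ, mul_one, h]
        refine ⟨by omega, ⟨fun hS i hi _ => ?_, fun hz => ?_⟩⟩
        · rw [Nat.lt_one_iff.1 hi]
          omega
        · simp [hz 0 one_pos Even.zero]
      rw [show 2 * (μ + 1) = 2 * μ + 2 by ring] at ih ⊢
      by_cases hc : b (2 * μ + 2) = 0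
      · rw [ostrowskiSum_succ, hc, zero_mul, add_zero]
        refine ⟨ih.1, ih.2.trans ⟨fun h i hi hev => ?_, fun h i hi => h i (by omega)⟩⟩
        rcases (Nat.lt_succ_iff.1 hi).lt_or_eq with hi | rfl
        exacts [h i hi hev, hc]
      have := one_le_S_ostrowskiSum_of_ne_zero hξ hirr hBR hb μ ih.1 ih.2.1 hc
      rw [show 2 * μ + 2 + 1 = 2 * μ + 3 by ring]
      exact ⟨by omega, iff_of_false (by omega) fun h => hc (h _ (by omega) ⟨μ + 1, by ring⟩)⟩
    · have hlt := hb.ostrowskiSum_lt_cfQ (2 * k + 2)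
      rw [ostrowskiSum_succ] at hlt ⊢
      rw [S_add_mul_cfQ_odd hξ hirr hBR k _ _ hlt.le]
      refine ⟨ih.1, ih.2.trans ⟨fun h i hi hev => h i ?_ hev, fun h i hi => h i (by omega)⟩⟩
      rcases hev with ⟨r, rfl⟩
      omega

end Main

/-- For a BR-number `ξ`, an integer `N` with `ξ`-Ostrowski representation
`N = ∑_{i=0}^j b_i·q_i` is a zero of `S_n(2ξ)` iff all even-indexed digits vanish. -/
theorem stmt_11 (ξ : ℝ) (hξ : ξ ∈ Set.Ioo (0 : ℝ) 1) (hirr : Irrational ξ) (hBR : IsBR ξ)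
    (N j : ℕ) (b : ℕ → ℕ)
    (hrep : N = ∑ i ∈ Finset.range (j + 1), b i * cfQ ξ i)
    (hb0 : b 0 < cfA ξ 1)
    (hb : ∀ i : ℕ, 1 ≤ i → b i ≤ cfA ξ (i + 1))
    (hbz : ∀ i : ℕ, 1 ≤ i → b i = cfA ξ (i + 1) → b (i - 1) = 0) :
    S (2 * ξ) N = 0 ↔ ∀ i : ℕ, i ≤ j → Even i → b i = 0 := by
  have hdigits : IsOstrowskiDigits ξ b :=
    ⟨hb0, fun i => hb (i + 1) (by omega), fun i h => by simpa using hbz (i + 1) (by omega) h⟩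
  subst hrep
  refine (S_two_mul_ostrowskiSum hξ hirr hBR hdigits (j + 1)).2.trans ?_
  simp only [Nat.lt_succ_iff]
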